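/- Let f : E → ℝ be differentiable, L-smooth, and μ-strongly convex with 0 < μ ≤ L, let g : E → ℝ be convex and continuous, let 0 < λ ≤ 1/L, and let x* ∈ E be a global minimizer of F = f + g. Let x : ℕ → E be a sequence such that for every k, x_{k+1} is a global minimizer over y ∈ E of y ↦ (1/(2λ))·‖y - (x_k - λ·∇f(x_k))‖² + g(y). Then for every n ≥ 1, F(x_n) - F(x*) ≤ (1 + λμ/4)^{-n}·(F(x_0) - F(x*)). -/

import Mathlib

/-!
A proximal gradient step `x ↦ p` with step size `λ` satisfies, for every `y`,
`F p + ‖y - p‖² / (2λ) ≤ F y + (1 / (2λ) - μ / 2) ‖y - x‖²`: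
add the descent lemma (valid since `λ ≤ 1 / L`), the strong convexity inequality of `f` at `x`,
and the quadratic growth of the `1/λ`-strongly convex prox objective around its minimiser `p`.
Taking `y = t x⋆ + (1 - t) x` with `t = λμ` and using the `μ`-strong convexity of `F`, the
quadratic terms cancel and `F p - F x⋆ ≤ (1 - λμ) (F x - F x⋆)`; and `1 - λμ ≤ (1 + λμ/4)⁻¹`.
-/

open RealInnerProductSpace Set Filter Topology

section StrongConvexity

variable {E : Type*} [NormedAddCommGroup E] [InnerProductSpace ℝ E] {s : Set E} {f g : E → ℝ}
  {m : ℝ}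

lemma strongConvexOn_of_add_inner_le {f' : E → E} (hs : Convex ℝ s)
    (h : ∀ x ∈ s, ∀ y ∈ s, f x + ⟪f' x, y - x⟫ + m / 2 * ‖y - x‖ ^ 2 ≤ f y) :
    StrongConvexOn s m f := by
  refine ⟨hs, fun x hx y hy a b ha hb hab => ?_⟩
  have hz := hs hx hy ha hb hab
  obtain rfl := eq_sub_of_add_eq hab
  have hxz : x - ((1 - b) • x + b • y) = b • (x - y) := by module
  have hyz : y - ((1 - b) • x + b • y) = (b - 1) • (x - y) := by module
  have hx' := h _ hz x hx
  have hy' := h _ hz y hy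
  rw [hxz, real_inner_smul_right, norm_smul, mul_pow, Real.norm_eq_abs, sq_abs] at hx'
  rw [hyz, real_inner_smul_right, norm_smul, mul_pow, Real.norm_eq_abs, sq_abs] at hy'
  simp only [smul_eq_mul]
  nlinarith [mul_le_mul_of_nonneg_left hx' ha, mul_le_mul_of_nonneg_left hy' hb]

lemma StrongConvexOn.add_convexOn (hf : StrongConvexOn s m f) (hg : ConvexOn ℝ s g) :
    StrongConvexOn s m (f + g) := by
  have h := hf.add hg.uniformConvexOn_zero
  rwa [add_zero] at h

lemma strongConvexOn_mul_norm_sub_sq (c : ℝ) (w : E) :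
    StrongConvexOn univ (2 * c) fun y => c * ‖y - w‖ ^ 2 := by
  refine ⟨convex_univ, fun x _ y _ a b _ _ hab => ?_⟩
  obtain rfl := eq_sub_of_add_eq hab
  dsimp only
  have hsplit : (1 - b) • x + b • y - w = (1 - b) • (x - w) + b • (y - w) := by module
  have hdiff : x - y = (x - w) - (y - w) := by abel
  rw [hsplit, hdiff]
  generalize x - w = u
  generalize y - w = v
  rw [norm_add_sq_real, norm_sub_sq_real, norm_smul, norm_smul, real_inner_smul_left,
    real_inner_smul_right, mul_pow, mul_pow, Real.norm_eq_abs, Real.norm_eq_abs, sq_abs, sq_abs,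
    smul_eq_mul, smul_eq_mul]
  exact le_of_eq (by ring)

lemma StrongConvexOn.add_mul_norm_sub_sq_le_of_isMinOn (hf : StrongConvexOn s m f) {a y : E}
    (ha : a ∈ s) (hy : y ∈ s) (hmin : IsMinOn f s a) :
    f a + m / 2 * ‖y - a‖ ^ 2 ≤ f y := by
  set K := m / 2 * ‖y - a‖ ^ 2 with hK
  have hsegment : ∀ t ∈ Ioo (0 : ℝ) 1, f a + (1 - t) * K ≤ f y := by
    rintro t ⟨ht0, ht1⟩
    have hcomb := hf.2 hy ha ht0.le (sub_nonneg.2 ht1.le) (add_sub_cancel t 1)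
    have hle := isMinOn_iff.1 hmin _ (hf.1 hy ha ht0.le (sub_nonneg.2 ht1.le) (add_sub_cancel t 1))
    simp only [smul_eq_mul, ← hK] at hcomb
    refine le_of_mul_le_mul_left ?_ ht0
    linarith
  have hlim : Tendsto (fun t : ℝ => f a + (1 - t) * K) (𝓝[>] 0) (𝓝 (f a + K)) := by
    have hcont : Continuous fun t : ℝ => f a + (1 - t) * K := by fun_prop
    simpa using hcont.continuousWithinAt (s := Ioi 0) (x := 0) |>.tendsto
  exact le_of_tendsto hlim (eventually_of_mem (Ioo_mem_nhdsGT one_pos) hsegment)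

end StrongConvexity

section ProximalGradient

variable {E : Type*} [NormedAddCommGroup E] [InnerProductSpace ℝ E] {f g : E → ℝ} {f' : E → E}

theorem le_add_inner_add_sq_of_lipschitz_gradient [CompleteSpace E] {L : ℝ}
    (hf : ∀ x, HasGradientAt f (f' x) x) (hL : ∀ x y, ‖f' x - f' y‖ ≤ L * ‖x - y‖) (x y : E) :
    f y ≤ f x + ⟪f' x, y - x⟫ + L / 2 * ‖y - x‖ ^ 2 := by
  set v := y - x
  set φ : ℝ → ℝ := fun t => f (x + t • v) - t * ⟪f' x, v⟫ - L / 2 * ‖v‖ ^ 2 * t ^ 2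
  have hφ : ∀ t, HasDerivAt φ (⟪f' (x + t • v), v⟫ - ⟪f' x, v⟫ - L * ‖v‖ ^ 2 * t) t := by
    intro t
    have hline : HasDerivAt (fun s : ℝ => x + s • v) v t := by
      simpa using ((hasDerivAt_id t).smul_const v).const_add x
    have hcomp : HasDerivAt (fun s : ℝ => f (x + s • v)) ⟪f' (x + t • v), v⟫ t :=
      (hf _).hasFDerivAt.comp_hasDerivAt t hline
    refine ((hcomp.sub ((hasDerivAt_id t).mul_const ⟪f' x, v⟫)).sub
      ((hasDerivAt_pow 2 t).const_mul (L / 2 * ‖v‖ ^ 2))).congr_deriv ?_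
    simp only [Nat.cast_ofNat, one_mul]
    ring
  have hφ_nonpos : ∀ t ∈ interior (Icc (0 : ℝ) 1), deriv φ t ≤ 0 := by
    intro t ht
    rw [interior_Icc] at ht
    have hlip : ‖f' (x + t • v) - f' x‖ ≤ L * (t * ‖v‖) := by
      simpa [norm_smul, abs_of_pos ht.1] using hL (x + t • v) x
    have hcs := real_inner_le_norm (f' (x + t • v) - f' x) v
    rw [inner_sub_left] at hcs
    rw [(hφ t).deriv]
    nlinarith [mul_le_mul_of_nonneg_right hlip (norm_nonneg v)]
  have hanti : AntitoneOn φ (Icc 0 1) :=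
    antitoneOn_of_deriv_nonpos (convex_Icc 0 1)
      (fun t _ => (hφ t).continuousAt.continuousWithinAt)
      (fun t _ => (hφ t).differentiableAt.differentiableWithinAt) hφ_nonpos
  have h01 := hanti (left_mem_Icc.2 zero_le_one) (right_mem_Icc.2 zero_le_one) zero_le_one
  simp only [φ, v, zero_smul, add_zero, one_smul, add_sub_cancel, zero_mul, sub_zero,
    one_mul, one_pow, mul_one] at h01
  linarith

theorem proxGrad_step_le {lam μ : ℝ} (hlam : lam ≠ 0) (hg : ConvexOn ℝ univ g) {x p : E}
    (hp : ∀ y, 1 / (2 * lam) * ‖p - (x - lam • f' x)‖ ^ 2 + g p ≤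
      1 / (2 * lam) * ‖y - (x - lam • f' x)‖ ^ 2 + g y)
    (hdesc : f p ≤ f x + ⟪f' x, p - x⟫ + 1 / (2 * lam) * ‖p - x‖ ^ 2)
    {y : E} (hstrong : f x + ⟪f' x, y - x⟫ + μ / 2 * ‖y - x‖ ^ 2 ≤ f y) :
    f p + g p + 1 / (2 * lam) * ‖y - p‖ ^ 2 ≤
      f y + g y + (1 / (2 * lam) - μ / 2) * ‖y - x‖ ^ 2 := by
  set c := 1 / (2 * lam)
  have hthree : c * ‖p - (x - lam • f' x)‖ ^ 2 + g p + c * ‖y - p‖ ^ 2 ≤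
      c * ‖y - (x - lam • f' x)‖ ^ 2 + g y := by
    have := ((strongConvexOn_mul_norm_sub_sq c (x - lam • f' x)).add_convexOn hg
      ).add_mul_norm_sub_sq_le_of_isMinOn (mem_univ p) (mem_univ y)
      (isMinOn_univ_iff.2 hp)
    simp only [Pi.add_apply] at this
    linarith
  have hexpand : ∀ u : E, c * ‖u - (x - lam • f' x)‖ ^ 2 =
      c * ‖u - x‖ ^ 2 + ⟪f' x, u - x⟫ + c * lam ^ 2 * ‖f' x‖ ^ 2 := by
    intro u
    rw [show u - (x - lam • f' x) = (u - x) + lam • f' x by abel, norm_add_sq_real,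
      real_inner_smul_right, real_inner_comm, norm_smul, Real.norm_eq_abs, mul_pow, sq_abs]
    have hc : c * (2 * lam) = 1 := one_div_mul_cancel (mul_ne_zero two_ne_zero hlam)
    linear_combination ⟪f' x, u - x⟫ * hc
  rw [hexpand, hexpand] at hthree
  linarith

theorem StrongConvexOn.sub_le_one_sub_mul_of_proxGrad_step {F : E → ℝ} {μ lam : ℝ}
    (hF : StrongConvexOn univ μ F) (hlam : 0 < lam) (hμ : 0 ≤ μ) (hlamμ : lam * μ ≤ 1) {x p : E}
    (hstep : ∀ y, F p + 1 / (2 * lam) * ‖y - p‖ ^ 2 ≤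
      F y + (1 / (2 * lam) - μ / 2) * ‖y - x‖ ^ 2) (z : E) :
    F p - F z ≤ (1 - lam * μ) * (F x - F z) := by
  set t := lam * μ
  -- With `t = lam * μ` the quadratic terms cancel exactly.
  have hcomb := hF.2 (mem_univ z) (mem_univ x) (by positivity) (sub_nonneg.2 hlamμ)
    (add_sub_cancel t 1)
  have hdist : ‖(t • z + (1 - t) • x) - x‖ ^ 2 = t ^ 2 * ‖z - x‖ ^ 2 := by
    rw [show (t • z + (1 - t) • x) - x = t • (z - x) by module, norm_smul, mul_pow,
      Real.norm_eq_abs, sq_abs]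
  have hy := hstep (t • z + (1 - t) • x)
  rw [hdist] at hy
  have hcancel : (1 / (2 * lam) - μ / 2) * (t ^ 2 * ‖z - x‖ ^ 2) =
      t * (1 - t) * (μ / 2 * ‖z - x‖ ^ 2) := by
    simp only [t]
    field_simp
  rw [hcancel] at hy
  simp only [smul_eq_mul] at hcomb
  have : 0 ≤ 1 / (2 * lam) * ‖t • z + (1 - t) • x - p‖ ^ 2 := by positivity
  linarith

end ProximalGradient

theorem prox_gd_strongly_convex_convergence_general {E : Type*} [NormedAddCommGroup E]
    [InnerProductSpace ℝ E] [CompleteSpace E]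
    (f g : E → ℝ) (f' : E → E) (L μ : ℝ) (hμ : 0 < μ) (hμL : μ ≤ L)
    (hdiff : ∀ x, HasGradientAt f (f' x) x)
    (hsmooth : ∀ x y, ‖f' x - f' y‖ ≤ L * ‖x - y‖)
    (hstrong : ∀ x y, f x + ⟪f' x, y - x⟫ + (μ / 2) * ‖y - x‖ ^ 2 ≤ f y)
    (hgconv : ConvexOn ℝ Set.univ g)
    (lam : ℝ) (hlam : 0 < lam) (hlamL : lam ≤ 1 / L)
    (F : E → ℝ) (hF : F = fun y => f y + g y)
    (xstar : E) (hmin : ∀ y, F xstar ≤ F y)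
    (x : ℕ → E)
    (hiter : ∀ k, ∀ y : E,
      (1 / (2 * lam)) * ‖x (k + 1) - (x k - lam • f' (x k))‖ ^ 2 + g (x (k + 1)) ≤
        (1 / (2 * lam)) * ‖y - (x k - lam • f' (x k))‖ ^ 2 + g y) :
    ∀ n : ℕ, 1 ≤ n →
      F (x n) - F xstar ≤ (1 + lam * μ / 4)⁻¹ ^ n * (F (x 0) - F xstar) := by
  have hL : 0 < L := hμ.trans_le hμL
  have hlamL_mul : lam * L ≤ 1 := (le_div_iff₀ hL).1 hlamL
  have hlamμ : lam * μ ≤ 1 := (mul_le_mul_of_nonneg_left hμL hlam.le).trans hlamL_mul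
  have hc : L / 2 ≤ 1 / (2 * lam) := by
    rw [div_le_div_iff₀ two_pos (by positivity)]
    linarith
  have hstep : ∀ k y, F (x (k + 1)) + 1 / (2 * lam) * ‖y - x (k + 1)‖ ^ 2 ≤
      F y + (1 / (2 * lam) - μ / 2) * ‖y - x k‖ ^ 2 := fun k y => by
    have := proxGrad_step_le hlam.ne' hgconv (hiter k)
      ((le_add_inner_add_sq_of_lipschitz_gradient hdiff hsmooth _ _).trans (by gcongr))
      (hstrong (x k) y)
    simpa only [hF, add_assoc] using this
  have hFconv : StrongConvexOn univ μ F := by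
    rw [hF]
    exact (strongConvexOn_of_add_inner_le convex_univ fun x _ y _ => hstrong x y).add_convexOn
      hgconv
  have hrate : 1 - lam * μ ≤ (1 + lam * μ / 4)⁻¹ := by
    rw [← one_div, le_div_iff₀ (by positivity)]
    nlinarith [mul_pos hlam hμ]
  intro n _
  refine le_geom (u := fun k => F (x k) - F xstar) (by positivity) n fun k _ => ?_
  calc F (x (k + 1)) - F xstar ≤ (1 - lam * μ) * (F (x k) - F xstar) :=
        hFconv.sub_le_one_sub_mul_of_proxGrad_step hlam hμ.le hlamμ (hstep k) xstar
    _ ≤ (1 + lam * μ / 4)⁻¹ * (F (x k) - F xstar) :=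
        mul_le_mul_of_nonneg_right hrate (sub_nonneg.2 (hmin _))

theorem prox_gd_strongly_convex_convergence {E : Type*} [NormedAddCommGroup E]
    [InnerProductSpace ℝ E] [CompleteSpace E]
    (f g : E → ℝ) (f' : E → E) (L μ : ℝ) (hμ : 0 < μ) (hμL : μ ≤ L)
    (hdiff : ∀ x, HasGradientAt f (f' x) x)
    (hsmooth : ∀ x y, ‖f' x - f' y‖ ≤ L * ‖x - y‖)
    (hstrong : ∀ x y, f x + ⟪f' x, y - x⟫ + (μ / 2) * ‖y - x‖ ^ 2 ≤ f y)
    (hgconv : ConvexOn ℝ Set.univ g) (hgcont : Continuous g)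
    (lam : ℝ) (hlam : 0 < lam) (hlamL : lam ≤ 1 / L)
    (F : E → ℝ) (hF : F = fun y => f y + g y)
    (xstar : E) (hmin : ∀ y, F xstar ≤ F y)
    (x : ℕ → E)
    (hiter : ∀ k, ∀ y : E,
      (1 / (2 * lam)) * ‖x (k + 1) - (x k - lam • f' (x k))‖ ^ 2 + g (x (k + 1)) ≤
        (1 / (2 * lam)) * ‖y - (x k - lam • f' (x k))‖ ^ 2 + g y) :
    ∀ n : ℕ, 1 ≤ n →
      F (x n) - F xstar ≤ (1 + lam * μ / 4)⁻¹ ^ n * (F (x 0) - F xstar) :=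
  prox_gd_strongly_convex_convergence_general f g f' L μ hμ hμL hdiff hsmooth hstrong hgconv lam
    hlam hlamL F hF xstar hmin x hiter
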